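/- arXiv:1304.6995 — 2 statements merged into one kernel-verified Lean document; each statement's English description precedes it below -/
import Mathlib

section
/- Let (c_n) be a nonincreasing sequence of nonnegative reals, let K > 0 and d > 0, and suppose that for all n, c_n^{1+1/(2d)} ≤ K (c_n − c_{n+1} + h² c_n) with 0 < h ≤ 1. Then there exists a constant A > 0, depending only on K and d (not on h or the sequence), such that c_n ≤ (A h^{-2}/(1+n))^{2d} for all 0 ≤ n ≤ h^{-2}. -/
open Real Set

lemma nash_aux_pow (p x : ℝ) (hp : 1 ≤ p) (hx0 : 0 ≤ x) (hx1 : x ≤ 1) :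
    (1 + x) ^ p ≤ 1 + (2 ^ p - 1) * x := by
  have hc := (convexOn_rpow hp).2 (show (1:ℝ) ∈ Ici 0 by norm_num)
    (show (2:ℝ) ∈ Ici 0 by norm_num) (show (0:ℝ) ≤ 1 - x by linarith) hx0 (by ring)
  simp only [smul_eq_mul, Real.one_rpow] at hc
  have h1 : (1 - x) * 1 + x * 2 = 1 + x := by ring
  rw [h1] at hc
  linarith

/-- Discrete Nash-type iteration lemma: a nonincreasing nonnegative sequence satisfying
`cₙ^{1+1/(2d)} ≤ K (cₙ - cₙ₊₁ + h² cₙ)` decays like `(A h⁻²/(1+n))^{2d}` for `n ≤ h⁻²`,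
with `A` depending only on `K` and `d`. -/
theorem stmt7 (K d : ℝ) (hK : 0 < K) (hd : 0 < d) :
    ∃ A : ℝ, 0 < A ∧ ∀ h : ℝ, 0 < h → h ≤ 1 → ∀ c : ℕ → ℝ,
      (∀ n, 0 ≤ c n) → (∀ n, c (n + 1) ≤ c n) →
      (∀ n, c n ^ (1 + 1 / (2 * d)) ≤ K * (c n - c (n + 1) + h ^ 2 * c n)) →
      ∀ n : ℕ, (n : ℝ) ≤ 1 / h ^ 2 →
        c n ≤ ((A * (1 / h ^ 2)) / (1 + (n : ℝ))) ^ (2 * d) := by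
  have hd2 : (0:ℝ) < 2 * d := by linarith
  set α : ℝ := 1 + 1 / (2 * d) with hα
  have hα1 : (1:ℝ) ≤ α := by
    have : 0 < 1 / (2 * d) := by positivity
    rw [hα]; linarith
  set E : ℝ := 2 ^ (2 * d + 1) with hE
  have hE0 : (0:ℝ) < E := Real.rpow_pos_of_pos two_pos _
  have hE1 : (1:ℝ) ≤ E := Real.one_le_rpow one_le_two (by linarith)
  set A : ℝ := 2 * K * (E + 1) with hA
  have hA0 : 0 < A := by positivity
  have hA2K : 2 * K ≤ A := by rw [hA]; nlinarith
  clear_value α E A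
  refine ⟨A, hA0, ?_⟩
  intro h hh0 hh1 c hc0 hmono hrec
  have hh2 : (0:ℝ) < h ^ 2 := by positivity
  have hh2le1 : h ^ 2 ≤ 1 := by nlinarith
  have hinv1 : (1:ℝ) ≤ 1 / h ^ 2 := by rw [le_div_iff₀ hh2]; nlinarith
  set B : ℝ := A * (1 / h ^ 2) with hB
  have hB0 : (0:ℝ) < B := by rw [hB]; positivity
  have hAB : A ≤ B := by rw [hB]; nlinarith
  clear_value B
  -- crude uniform bound
  have hbound0 : ∀ n, c n ≤ (2 * K) ^ (2 * d) := by
    intro n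
    rcases (hc0 n).eq_or_lt with hz | hpos
    · rw [← hz]; positivity
    · have h1 : c n ^ α ≤ 2 * K * c n := by
        refine le_trans (hrec n) ?_
        have hstep : c n - c (n + 1) + h ^ 2 * c n ≤ 2 * c n := by
          have := mul_le_mul_of_nonneg_right hh2le1 (hc0 n)
          have := hc0 (n + 1)
          nlinarith
        nlinarith
      have h2 : c n ^ α = c n * c n ^ (1 / (2 * d)) := by
        rw [hα, Real.rpow_add hpos, Real.rpow_one]
      have h1' : c n * c n ^ (1 / (2 * d)) ≤ c n * (2 * K) := by
        calc c n * c n ^ (1 / (2 * d)) = c n ^ α := h2.symm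
          _ ≤ 2 * K * c n := h1
          _ = c n * (2 * K) := by ring
      have h3 : c n ^ (1 / (2 * d)) ≤ 2 * K := le_of_mul_le_mul_left h1' hpos
      have h4 : (c n ^ (1 / (2 * d))) ^ (2 * d) = c n := by
        rw [← Real.rpow_mul (hc0 n), one_div_mul_cancel (ne_of_gt hd2), Real.rpow_one]
      calc c n = (c n ^ (1 / (2 * d))) ^ (2 * d) := h4.symm
        _ ≤ (2 * K) ^ (2 * d) := Real.rpow_le_rpow (Real.rpow_nonneg (hc0 n) _) h3 hd2.le
  intro n
  induction n with
  | zero =>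
    intro _
    have h0 : ((0:ℕ):ℝ) = 0 := by norm_num
    rw [h0]
    have hgoal : (2 * K) ^ (2 * d) ≤ (B / (1 + 0)) ^ (2 * d) := by
      apply Real.rpow_le_rpow (by positivity) _ hd2.le
      rw [add_zero, div_one]
      linarith
    exact le_trans (hbound0 0) hgoal
  | succ n ih =>
    intro hn1
    push_cast at hn1 ⊢
    set N : ℝ := (n : ℝ) with hN
    have hN0 : (0:ℝ) ≤ N := by rw [hN]; positivity
    clear_value N
    have hn : N ≤ 1 / h ^ 2 := by linarith
    have hU := ih hn
    have hrw : (1 + (N + 1)) = N + 2 := by ring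
    rw [hrw]
    -- abbreviations
    set x : ℝ := 1 / (N + 1) with hx
    have hx0 : (0:ℝ) < x := by rw [hx]; positivity
    have hx1 : x ≤ 1 := by rw [hx, div_le_one (by linarith)]; linarith
    have hh2x : h ^ 2 ≤ x := by
      rw [le_div_iff₀ hh2] at hn1
      rw [hx, le_div_iff₀ (by linarith : (0:ℝ) < N + 1)]
      nlinarith
    clear_value x
    set r : ℝ := (N + 2) / (N + 1) with hr
    have hrpos : (0:ℝ) < r := by rw [hr]; positivity
    have hr1x : r = 1 + x := by rw [hr, hx]; field_simp; ring
    clear_value r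
    set T : ℝ := (B / (N + 2)) ^ (2 * d) with hT
    have hbase : (0:ℝ) < B / (N + 2) := div_pos hB0 (by linarith)
    have hT0 : (0:ℝ) ≤ T := by rw [hT]; exact Real.rpow_nonneg hbase.le _
    clear_value T
    set R : ℝ := r ^ (2 * d) with hR
    have hR0 : (0:ℝ) ≤ R := by rw [hR]; exact Real.rpow_nonneg hrpos.le _
    clear_value R
    set S : ℝ := B / ((N + 2) * K) with hS
    clear_value S
    by_contra hcon
    push_neg at hcon
    -- structural identities
    have hsplit : B / (1 + N) = B / (N + 2) * r := by
      have h2 : (N:ℝ) + 2 ≠ 0 := by linarith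
      rw [hr, div_mul_div_comm, mul_comm B (N + 2), mul_div_mul_left _ _ h2,
        add_comm (1:ℝ) N]
    have hUT : (B / (1 + N)) ^ (2 * d) = T * R := by
      rw [hsplit, Real.mul_rpow hbase.le hrpos.le, ← hT, ← hR]
    rw [hUT] at hU
    have hexp : 2 * d * α = 2 * d + 1 := by rw [hα]; field_simp
    have hTα : T ^ α = T * (B / (N + 2)) := by
      rw [hT, ← Real.rpow_mul hbase.le, hexp, Real.rpow_add hbase, Real.rpow_one]
    have hTS : T ^ α / K = T * S := by
      rw [hTα, hS, mul_div_assoc, div_div]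
    -- key inequality: R * r ≤ 1 + S
    have hRr : R * r = (1 + x) ^ (2 * d + 1) := by
      rw [← hr1x, hR, Real.rpow_add hrpos (2 * d) 1, Real.rpow_one]
    have haux : (1 + x) ^ (2 * d + 1) ≤ 1 + (E - 1) * x := by
      have := nash_aux_pow (2 * d + 1) x (by linarith) hx0.le hx1
      rw [← hE] at this
      exact this
    have hkey2 : (E - 1) * x ≤ S := by
      have hEx : (E - 1) * x = (E - 1) / (N + 1) := by rw [hx]; ring
      have hfact : 2 * K * (E + 1) ≤ B := hA.symm.le.trans hAB
      rw [hEx, hS, div_le_div_iff₀ (by linarith) (mul_pos (by linarith) hK)]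
      have f1 := mul_le_mul_of_nonneg_right hfact (show (0:ℝ) ≤ N + 1 by linarith)
      have t1 : 0 ≤ K * E * N := mul_nonneg (mul_nonneg hK.le hE0.le) hN0
      have t2 : 0 ≤ K * N := mul_nonneg hK.le hN0
      linarith [f1, t1, t2, hK.le]
    have hkey : R * r ≤ 1 + S := by rw [hRr]; linarith
    -- recursion step
    have hstep : c (n + 1) ≤ c n + x * c n - c n ^ α / K := by
      have h5 : c n ^ α / K ≤ c n - c (n + 1) + h ^ 2 * c n := by
        rw [div_le_iff₀ hK]
        calc c n ^ α ≤ K * (c n - c (n + 1) + h ^ 2 * c n) := hrec n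
          _ = (c n - c (n + 1) + h ^ 2 * c n) * K := by ring
      have h6 : h ^ 2 * c n ≤ x * c n := mul_le_mul_of_nonneg_right hh2x (hc0 n)
      linarith
    have hTScn : T * S ≤ c n ^ α / K := by
      rw [← hTS]
      have hTc : T ^ α ≤ c n ^ α :=
        Real.rpow_le_rpow hT0 (le_of_lt (lt_of_lt_of_le hcon (hmono n))) (by linarith)
      exact div_le_div_of_nonneg_right hTc hK.le
    have h7 : c n + x * c n ≤ (T * R) * (1 + x) := by
      linarith [mul_le_mul_of_nonneg_left hU (show (0:ℝ) ≤ 1 + x by linarith)]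
    have h8 : (T * R) * (1 + x) = T * (R * r) := by rw [hr1x]; ring
    have h9 : T * (R * r) ≤ T * (1 + S) := mul_le_mul_of_nonneg_left hkey hT0
    have hfin : c (n + 1) ≤ T := by linarith [hstep, h7, h8.le, h8.ge, h9, hTScn]
    exact absurd hfin (not_le.mpr hcon)
end

section
/- Let φ ∈ 𝒮(ℝⁿ) (Schwartz space) with ∫ φ dx = 0. Then there exist φ₁,…,φₙ ∈ 𝒮(ℝⁿ) such that φ = Σ_k ∂_k φ_k. -/
/-!
Under the Fourier transform `∂_{v}` becomes multiplication by `2πi ⟪ξ, v⟫`, and `∫ φ = 0` says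
`𝓕 φ 0 = 0`. So it suffices to write a Schwartz function `G` with `G 0 = 0` as `∑ ξ_k • h_k ξ`
with Schwartz `h_k`. Hadamard's lemma `G ξ = ∑ ξ_k • ∫₀¹ ∂_k G (t ξ) dt` gives coefficients of
temperate growth which need not decay. Writing `G = w • G - (w - 1) • G` for a Schwartz `w` with
`w 0 = 1` and applying Hadamard's lemma to `G` in the first term and to `w` in the second, every
coefficient becomes a product of a Schwartz function with a function of temperate growth.
-/

open scoped ContDiff Interval FourierTransform SchwartzMap
open MeasureTheory LineDeriv FourierTransform

noncomputable section

theorem norm_pow_smul_le_of_mem_uIoc {E : Type*} [NormedAddCommGroup E] [NormedSpace ℝ E]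
    {t : ℝ} (ht : t ∈ Ι (0 : ℝ) 1) (m : ℕ) (y : E) : ‖t ^ m • y‖ ≤ ‖y‖ := by
  rw [Set.uIoc_of_le zero_le_one] at ht
  rw [norm_smul, norm_pow, Real.norm_of_nonneg ht.1.le]
  exact mul_le_of_le_one_left (norm_nonneg y) (pow_le_one₀ ht.1.le ht.2)

namespace SchwartzMap

theorem seminorm_lineDerivOp_le (𝕜 : Type*) [RCLike 𝕜] {E F : Type*} [NormedAddCommGroup E]
    [NormedSpace ℝ E] [NormedAddCommGroup F] [NormedSpace ℝ F] [NormedSpace 𝕜 F]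
    [SMulCommClass ℝ 𝕜 F] (k n : ℕ) (v : E) (f : 𝓢(E, F)) :
    SchwartzMap.seminorm 𝕜 k n (∂_{v} f) ≤ ‖v‖ * SchwartzMap.seminorm 𝕜 k (n + 1) f := by
  refine seminorm_le_bound 𝕜 k n _ (by positivity) fun x => ?_
  calc ‖x‖ ^ k * ‖iteratedFDeriv ℝ n (fun y => fderiv ℝ f y v) x‖
      ≤ ‖x‖ ^ k * (‖v‖ * ‖iteratedFDeriv ℝ (n + 1) f x‖) := by
        rw [← norm_iteratedFDeriv_fderiv]
        gcongr
        exact norm_iteratedFDeriv_clm_apply_const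
          (contDiff_infty_iff_fderiv.1 (f.smooth ⊤)).2.contDiffAt (mod_cast le_top)
    _ ≤ ‖v‖ * SchwartzMap.seminorm 𝕜 k (n + 1) f := by
        rw [mul_left_comm]
        gcongr
        exact le_seminorm 𝕜 k (n + 1) f x

theorem exists_apply_zero_eq_one (V : Type*) [NormedAddCommGroup V] [NormedSpace ℝ V]
    [FiniteDimensional ℝ V] : ∃ w : 𝓢(V, ℝ), w 0 = 1 :=
  let β : ContDiffBump (0 : V) := ⟨1, 2, one_pos, one_lt_two⟩
  ⟨β.hasCompactSupport.toSchwartzMap β.contDiff,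
    β.one_of_mem_closedBall (Metric.mem_closedBall_self β.rIn_pos.le)⟩

variable {V E : Type*} [NormedAddCommGroup V] [NormedSpace ℝ V] [NormedAddCommGroup E]
  [NormedSpace ℝ E]

/-- The weight `t ^ m` keeps the family closed under differentiation:
`D (dilationIntegral m f) = dilationIntegral (m + 1) (D f)`. -/
def dilationIntegral (m : ℕ) (f : 𝓢(V, E)) (x : V) : E :=
  ∫ t in (0 : ℝ)..1, t ^ m • f (t • x)

theorem norm_dilationIntegral_le (m : ℕ) (f : 𝓢(V, E)) (x : V) :
    ‖dilationIntegral m f x‖ ≤ SchwartzMap.seminorm ℝ 0 0 f := by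
  simpa [dilationIntegral] using intervalIntegral.norm_integral_le_of_norm_le_const fun t ht =>
    (norm_pow_smul_le_of_mem_uIoc ht m (f (t • x))).trans (norm_le_seminorm ℝ f (t • x))

theorem hasFDerivAt_dilationIntegral (m : ℕ) (f : 𝓢(V, E)) (x : V) :
    HasFDerivAt (dilationIntegral m f) (dilationIntegral (m + 1) (fderivCLM ℝ V E f) x) x := by
  have hasFDerivAt_integrand (t : ℝ) (y : V) :
      HasFDerivAt (fun z => t ^ m • f (t • z)) (t ^ (m + 1) • fderiv ℝ f (t • y)) y := by
    refine (((f.hasFDerivAt (t • y)).comp y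
      (t • ContinuousLinearMap.id ℝ V).hasFDerivAt).const_smul (t ^ m)).congr_fderiv ?_
    ext v
    simp [pow_succ, mul_smul]
  refine intervalIntegral.hasFDerivAt_integral_of_dominated_of_fderiv_le
    (F := fun y t => t ^ m • f (t • y)) (F' := fun y t => t ^ (m + 1) • fderivCLM ℝ V E f (t • y))
    (bound := fun _ => SchwartzMap.seminorm ℝ 0 0 (fderivCLM ℝ V E f))
    (Metric.ball_mem_nhds x one_pos) (.of_forall fun y => by fun_prop)
    ((by fun_prop : Continuous _).intervalIntegrable 0 1) (by fun_prop) ?_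
    intervalIntegrable_const ?_
  · exact .of_forall fun t ht y _ =>
      (norm_pow_smul_le_of_mem_uIoc ht _ _).trans (norm_le_seminorm ℝ (fderivCLM ℝ V E f) (t • y))
  · exact .of_forall fun t _ y _ => hasFDerivAt_integrand t y

theorem dilationIntegral_fderivCLM_apply (m : ℕ) (f : 𝓢(V, E)) (x v : V) :
    dilationIntegral m (fderivCLM ℝ V E f) x v = dilationIntegral m (∂_{v} f) x := by
  rw [dilationIntegral, ContinuousLinearMap.intervalIntegral_apply
    ((by fun_prop : Continuous _).intervalIntegrable 0 1)]
  rfl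

theorem fderiv_dilationIntegral_apply (m : ℕ) (f : 𝓢(V, E)) (x v : V) :
    fderiv ℝ (dilationIntegral m f) x v = dilationIntegral (m + 1) (∂_{v} f) x := by
  rw [(hasFDerivAt_dilationIntegral m f x).fderiv, dilationIntegral_fderivCLM_apply]

theorem differentiable_dilationIntegral (m : ℕ) (f : 𝓢(V, E)) :
    Differentiable ℝ (dilationIntegral m f) :=
  fun x => (hasFDerivAt_dilationIntegral m f x).differentiableAt

section Hadamard

variable [CompleteSpace E]

theorem sub_apply_zero_eq_dilationIntegral (f : 𝓢(V, E)) (x : V) :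
    f x - f 0 = dilationIntegral 0 (fderivCLM ℝ V E f) x x := by
  have hasDerivAt_segment (t : ℝ) : HasDerivAt (fun s : ℝ => f (s • x)) (∂_{x} f (t • x)) t :=
    (f.hasFDerivAt (t • x)).comp_hasDerivAt t
      ((hasDerivAt_id t).smul_const x |>.congr_deriv (one_smul ℝ x))
  rw [dilationIntegral_fderivCLM_apply, dilationIntegral]
  simp only [pow_zero, one_smul]
  rw [intervalIntegral.integral_eq_sub_of_hasDerivAt (fun t _ => hasDerivAt_segment t)
    ((by fun_prop : Continuous _).intervalIntegrable 0 1)]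
  simp

theorem sub_apply_zero_eq_sum_coord_smul {ι : Type*} [Fintype ι] (b : Module.Basis ι ℝ V)
    (f : 𝓢(V, E)) (x : V) : f x - f 0 = ∑ k, b.coord k x • dilationIntegral 0 (∂_{b k} f) x := by
  rw [sub_apply_zero_eq_dilationIntegral]
  conv_lhs => arg 2; rw [← b.sum_repr x]
  simp only [map_sum, map_smul, dilationIntegral_fderivCLM_apply, Module.Basis.coord_apply]

end Hadamard

variable [FiniteDimensional ℝ V]

theorem contDiff_dilationIntegral (m : ℕ) (f : 𝓢(V, E)) : ContDiff ℝ ∞ (dilationIntegral m f) := by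
  refine contDiff_infty.2 fun N => ?_
  induction N generalizing m f with
  | zero => exact contDiff_zero.2 (differentiable_dilationIntegral m f).continuous
  | succ N ih =>
    rw [Nat.cast_add_one, contDiff_succ_iff_fderiv_apply]
    refine ⟨differentiable_dilationIntegral m f, by simp, fun v => ?_⟩
    simp_rw [fderiv_dilationIntegral_apply]
    exact ih (m + 1) (∂_{v} f)

theorem norm_iteratedFDeriv_dilationIntegral_apply_le (N m : ℕ) (f : 𝓢(V, E)) (x : V)
    (v : Fin N → V) :
    ‖iteratedFDeriv ℝ N (dilationIntegral m f) x v‖ ≤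
      SchwartzMap.seminorm ℝ 0 N f * ∏ i, ‖v i‖ := by
  induction N generalizing m f with
  | zero => simpa using norm_dilationIntegral_le m f x
  | succ N ih =>
    rw [iteratedFDeriv_succ_apply_right, ← iteratedFDeriv_clm_apply_const_apply
      (contDiff_infty_iff_fderiv.1 (contDiff_dilationIntegral m f)).2 (mod_cast le_top)]
    simp_rw [fderiv_dilationIntegral_apply]
    calc _ ≤ SchwartzMap.seminorm ℝ 0 N (∂_{v (Fin.last N)} f) * ∏ i, ‖Fin.init v i‖ := ih _ _ _
      _ ≤ ‖v (Fin.last N)‖ * SchwartzMap.seminorm ℝ 0 (N + 1) f * ∏ i, ‖Fin.init v i‖ := by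
        gcongr
        exact seminorm_lineDerivOp_le ℝ 0 N _ f
      _ = _ := by
        rw [Fin.prod_univ_castSucc]
        simp only [Fin.init]
        ring

theorem hasTemperateGrowth_dilationIntegral (m : ℕ) (f : 𝓢(V, E)) :
    (dilationIntegral m f).HasTemperateGrowth :=
  ⟨contDiff_dilationIntegral m f, fun N => ⟨0, SchwartzMap.seminorm ℝ 0 N f, fun x => by
    simpa using ContinuousMultilinearMap.opNorm_le_bound (apply_nonneg _ _)
      (norm_iteratedFDeriv_dilationIntegral_apply_le N m f x)⟩⟩

theorem exists_eq_sum_coord_smul_of_apply_zero_eq_zero [CompleteSpace E] {ι : Type*} [Fintype ι]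
    (b : Module.Basis ι ℝ V) (G : 𝓢(V, E)) (hG : G 0 = 0) :
    ∃ h : ι → 𝓢(V, E), ∀ x, G x = ∑ k, b.coord k x • h k x := by
  obtain ⟨w, hw⟩ := exists_apply_zero_eq_one V
  let a k := dilationIntegral 0 (∂_{b k} G)
  let c k := dilationIntegral 0 (∂_{b k} w)
  have ha k : (a k).HasTemperateGrowth := hasTemperateGrowth_dilationIntegral 0 _
  have hc k : (c k).HasTemperateGrowth := hasTemperateGrowth_dilationIntegral 0 _
  refine ⟨fun k => bilinLeftCLM (ContinuousLinearMap.lsmul ℝ ℝ) (ha k) w - smulLeftCLM E (c k) G,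
    fun x => ?_⟩
  have hGx : G x = ∑ k, b.coord k x • a k x := by
    simpa [hG] using sub_apply_zero_eq_sum_coord_smul b G x
  have hwx : w x - 1 = ∑ k, b.coord k x • c k x := by
    simpa [hw] using sub_apply_zero_eq_sum_coord_smul b w x
  simp only [sub_apply, bilinLeftCLM_apply, ContinuousLinearMap.lsmul_apply,
    smulLeftCLM_apply_apply (hc _)]
  calc G x = w x • G x - (w x - 1) • G x := by rw [sub_smul, one_smul, sub_sub_cancel]
    _ = w x • ∑ k, b.coord k x • a k x - (∑ k, b.coord k x • c k x) • G x := by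
      rw [← hGx, hwx]
    _ = _ := by
      simp only [Finset.smul_sum, Finset.sum_smul, ← Finset.sum_sub_distrib, smul_sub,
        smul_comm (w x), smul_smul, smul_eq_mul]

end SchwartzMap

theorem SchwartzMap.exists_eq_sum_lineDerivOp_of_integral_eq_zero {V E : Type*}
    [NormedAddCommGroup V] [InnerProductSpace ℝ V] [FiniteDimensional ℝ V] [MeasurableSpace V]
    [BorelSpace V] [NormedAddCommGroup E] [NormedSpace ℂ E] [CompleteSpace E] {ι : Type*}
    [Fintype ι] (b : OrthonormalBasis ι ℝ V) (φ : 𝓢(V, E)) (hφ : ∫ x, φ x = 0) :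
    ∃ ψ : ι → 𝓢(V, E), φ = ∑ k, ∂_{b k} (ψ k) := by
  have hφ0 : 𝓕 φ 0 = 0 := by simpa [fourier_coe, Real.fourier_eq] using hφ
  obtain ⟨h, hh⟩ := exists_eq_sum_coord_smul_of_apply_zero_eq_zero b.toBasis (𝓕 φ) hφ0
  set c : ℂ := 2 * Real.pi * Complex.I
  have hc : c ≠ 0 := by simp [c, Real.pi_ne_zero]
  refine ⟨fun k => 𝓕⁻ (c⁻¹ • h k), ?_⟩
  have hterm k ξ : 𝓕 (∂_{b k} (𝓕⁻ (c⁻¹ • h k))) ξ = b.toBasis.coord k ξ • h k ξ := by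
    rw [fourier_lineDerivOp_eq, fourier_fourierInv_eq, smul_apply,
      smulLeftCLM_apply_apply (Function.hasTemperateGrowth_inner_left (b k)), smul_apply,
      smul_comm, smul_smul, mul_inv_cancel₀ hc, one_smul, Module.Basis.coord_apply,
      OrthonormalBasis.coe_toBasis_repr_apply, OrthonormalBasis.repr_apply_apply, real_inner_comm]
  have hfourier : 𝓕 (∑ k, ∂_{b k} (𝓕⁻ (c⁻¹ • h k))) = 𝓕 φ := by
    ext ξ
    rw [fourier_sum, sum_apply, hh]
    exact Finset.sum_congr rfl fun k _ => hterm k ξ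
  simpa using congrArg 𝓕⁻ hfourier.symm

/-- Cohomological lemma, abelian case: a Schwartz function on `ℝⁿ` with zero integral is a
sum of coordinate derivatives of Schwartz functions. -/
theorem stmt15 (n : ℕ) (φ : SchwartzMap (Fin n → ℝ) ℂ) (hφ : ∫ x, φ x = 0) :
    ∃ ψ : Fin n → SchwartzMap (Fin n → ℝ) ℂ,
      ∀ x, φ x = ∑ k, (LineDeriv.lineDerivOpCLM ℝ (SchwartzMap (Fin n → ℝ) ℂ) (Pi.single k 1 : Fin n → ℝ) :
        SchwartzMap (Fin n → ℝ) ℂ →L[ℝ] SchwartzMap (Fin n → ℝ) ℂ) (ψ k) x := by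
  -- The Fourier transform needs an inner product, so we transport `φ` to `EuclideanSpace`.
  let e := EuclideanSpace.equiv (Fin n) ℝ
  have hφe : ∫ x, SchwartzMap.compCLMOfContinuousLinearEquiv ℝ e φ x = 0 :=
    ((EuclideanSpace.volume_preserving_symm_measurableEquiv_toLp (Fin n)).integral_comp' φ).trans hφ
  obtain ⟨ψ, hψ⟩ := SchwartzMap.exists_eq_sum_lineDerivOp_of_integral_eq_zero
    (EuclideanSpace.basisFun (Fin n) ℝ) _ hφe
  refine ⟨fun k => SchwartzMap.compCLMOfContinuousLinearEquiv ℝ e.symm (ψ k), fun x => ?_⟩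
  have hbasis k : e.symm (Pi.single k 1) = EuclideanSpace.basisFun (Fin n) ℝ k := by
    ext j; simp [e]
  simpa [SchwartzMap.lineDerivOp_compCLMOfContinuousLinearEquiv, hbasis]
    using congrArg (fun f => f (e.symm x)) hψ
end
end
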